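/- arXiv:2311.09804 — 3 statements merged into one kernel-verified Lean document; each statement's English description precedes it below -/
import Mathlib

section
/- The expectation of the Jaccard index of any pair of distinct vertices in G(n,p) equals p/(2-p) for all n ≥ 2 and p ∈ (0,1). -/
open MeasureTheory ProbabilityTheory Filter
open scoped ENNReal

/-- The Erdős–Rényi random graph `G(n,p)`: each of the possible edges `{i,j}`, `i < j`,
is present independently with probability `p`. -/
noncomputable def gnp (n : ℕ) (p : ℝ≥0∞) (hp : p ≤ 1) :
    Measure ({e : Fin n × Fin n // e.1 < e.2} → Bool) :=
  Measure.pi fun _ => (PMF.bernoulli p.toNNReal (by simpa using ENNReal.toNNReal_mono ENNReal.one_ne_top hp)).toMeasure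

/-- The indicator `I_ij` that the edge `{i,j}` is present in the graph `ω`. -/
def eInd {n : ℕ} (ω : {e : Fin n × Fin n // e.1 < e.2} → Bool) (i j : Fin n) : ℕ :=
  if h : i < j then (if ω ⟨(i, j), h⟩ then 1 else 0)
  else if h' : j < i then (if ω ⟨(j, i), h'⟩ then 1 else 0) else 0

/-- `S_ij`, the number of common neighbors of vertices `i` and `j`. -/
def Sij {n : ℕ} (i j : Fin n) (ω : {e : Fin n × Fin n // e.1 < e.2} → Bool) : ℕ :=
  ∑ k ∈ Finset.univ \ {i, j}, eInd ω i k * eInd ω j k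

/-- `T_ij`, the number of vertices `k ∉ {i,j}` adjacent to at least one of `i`, `j`. -/
def Tij {n : ℕ} (i j : Fin n) (ω : {e : Fin n × Fin n // e.1 < e.2} → Bool) : ℕ :=
  ∑ k ∈ Finset.univ \ {i, j}, max (eInd ω i k) (eInd ω j k)

/-- The Jaccard index `J_ij = S_ij / T_ij` of vertices `i` and `j`, with the
convention `J_ij = p/(2-p)` when `T_ij = 0`. -/
noncomputable def jac {n : ℕ} (p : ℝ) (i j : Fin n)
    (ω : {e : Fin n × Fin n // e.1 < e.2} → Bool) : ℝ :=
  if Tij i j ω = 0 then p / (2 - p) else (Sij i j ω : ℝ) / (Tij i j ω : ℝ)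

/-!
Write `q = p / (2 - p)` and, for a third vertex `k`, `a_k`, `b_k` for the indicators of the edges
`ik`, `jk`. Pointwise `J = q + ∑ₖ (a_k b_k - q max(a_k, b_k)) / T` (for `T = 0` both sides are `q`).
Once `ik` is present, `T` no longer sees the edge `jk`; so `a_k / T` does not depend on `b_k`, which
is independent of it, and `E[a_k b_k / T] = p E[a_k / T]`. Symmetrically
`E[a_k b_k / T] = p E[b_k / T]`, and with `max(a, b) = a + b - ab` every summand has mean zero.
-/

theorem integral_comp_eval_mul_of_update_eq {ι : Type*} [Fintype ι] [DecidableEq ι]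
    {Ω : ι → Type*} [∀ i, MeasurableSpace (Ω i)] (μ : ∀ i, Measure (Ω i))
    [∀ i, IsProbabilityMeasure (μ i)] {e : ι} {g : Ω e → ℝ} {f : (∀ i, Ω i) → ℝ}
    (hg : Measurable g) (hf : Measurable f) (hfe : ∀ ω c, f (Function.update ω e c) = f ω) :
    ∫ ω, g (ω e) * f ω ∂Measure.pi μ = (∫ x, g x ∂μ e) * ∫ ω, f ω ∂Measure.pi μ := by
  obtain ⟨ω₀⟩ : Nonempty (∀ i, Ω i) := nonempty_of_isProbabilityMeasure (Measure.pi μ)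
  -- `f` factors through the coordinates other than `e`, which are independent of the `e`-th one
  let T := Finset.univ.erase e
  let extend (r : ∀ i : T, Ω i) : ∀ i, Ω i := fun i => if h : i ∈ T then r ⟨i, h⟩ else ω₀ i
  have hextend : Measurable extend := measurable_pi_lambda _ fun i => by
    by_cases h : i ∈ T <;> simp only [extend, h, dite_true, dite_false] <;> fun_prop
  have hf_extend : ∀ ω, f (extend fun i => ω i) = f ω := by
    intro ω
    have : (extend fun i => ω i) = Function.update ω e (ω₀ e) := by
      ext i
      by_cases h : i = e
      · subst h; simp [extend, T]
      · simp [extend, T, h]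
    rw [this, hfe]
  have hindep : IndepFun (fun ω : ∀ i, Ω i => (fun i : ({e} : Finset ι) => ω i))
      (fun ω : ∀ i, Ω i => (fun i : T => ω i)) (Measure.pi μ) :=
    (iIndepFun_pi (X := fun i (x : Ω i) => x) fun _ => aemeasurable_id).indepFun_finset _ _
      (by simp [T]) fun _ => measurable_pi_apply _
  let e' : ({e} : Finset ι) := ⟨e, Finset.mem_singleton_self e⟩
  have := (hindep.comp (φ := fun r => g (r e')) (ψ := fun r => f (extend r))
    (by fun_prop) (by fun_prop)).integral_fun_mul_eq_mul_integral
    (Measurable.aestronglyMeasurable (by fun_prop)) (Measurable.aestronglyMeasurable (by fun_prop))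
  simp only [Function.comp_apply, hf_extend] at this
  rw [← (measurePreserving_eval μ e).map_eq,
    integral_map (measurable_pi_apply e).aemeasurable hg.aestronglyMeasurable]
  exact this

theorem PMF.integral_toNat_bernoulli {q : NNReal} (hq : q ≤ 1) :
    ∫ c, (c.toNat : ℝ) ∂(PMF.bernoulli q hq).toMeasure = q := by
  simp [PMF.integral_eq_sum, PMF.bernoulli_apply]

namespace Gnp

variable {n : ℕ}

abbrev Edge (n : ℕ) := {e : Fin n × Fin n // e.1 < e.2}

instance (p : ℝ≥0∞) (hp : p ≤ 1) : IsProbabilityMeasure (gnp n p hp) := by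
  unfold gnp; infer_instance

theorem integral_toNat_mul_of_update_eq {p : ℝ≥0∞} (hp : p ≤ 1) {e : Edge n}
    {f : (Edge n → Bool) → ℝ} (hf : ∀ ω c, f (Function.update ω e c) = f ω) :
    ∫ ω, ((ω e).toNat : ℝ) * f ω ∂gnp n p hp = p.toReal * ∫ ω, f ω ∂gnp n p hp := by
  have hp' : p.toNNReal ≤ 1 := by simpa using ENNReal.toNNReal_mono ENNReal.one_ne_top hp
  refine (integral_comp_eval_mul_of_update_eq (fun _ => (PMF.bernoulli _ hp').toMeasure)
    (g := fun c => (c.toNat : ℝ)) (measurable_of_finite _) (measurable_of_finite _) hf).trans ?_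
  rw [← ENNReal.coe_toNNReal_eq_toReal]
  congr 1
  exact PMF.integral_toNat_bernoulli _

def edge (i k : Fin n) (h : i ≠ k) : Edge n :=
  if h' : i < k then ⟨(i, k), h'⟩ else ⟨(k, i), lt_of_le_of_ne (not_lt.mp h') (Ne.symm h)⟩

theorem eInd_eq_toNat (ω : Edge n → Bool) {i k : Fin n} (h : i ≠ k) :
    eInd ω i k = (ω (edge i k h)).toNat := by
  unfold eInd edge
  rcases lt_or_gt_of_ne h with h' | h'
  · simp [h', Bool.toNat]
  · simp [h', not_lt.mpr h'.le, Bool.toNat]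

theorem eq_and_eq_or_eq_and_eq_of_edge_eq {i k a b : Fin n} {h : i ≠ k} {h' : a ≠ b}
    (he : edge i k h = edge a b h') : (i = a ∧ k = b) ∨ (i = b ∧ k = a) := by
  unfold edge at he
  split_ifs at he <;>
    · simp only [Subtype.mk.injEq, Prod.mk.injEq] at he
      tauto

theorem eInd_update_of_ne (ω : Edge n → Bool) {e : Edge n} (c : Bool) {i k : Fin n} (h : i ≠ k)
    (he : edge i k h ≠ e) : eInd (Function.update ω e c) i k = eInd ω i k := by
  rw [eInd_eq_toNat _ h, eInd_eq_toNat _ h, Function.update_of_ne he]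

theorem eInd_le_one (ω : Edge n → Bool) (i k : Fin n) : eInd ω i k ≤ 1 := by
  unfold eInd; split_ifs <;> simp

theorem Tij_comm (i j : Fin n) (ω : Edge n → Bool) : Tij i j ω = Tij j i ω := by
  simp only [Tij, Finset.pair_comm i j, max_comm]

theorem ne_and_ne_of_mem_univ_sdiff_pair {α : Type*} [Fintype α] [DecidableEq α] {i j k : α}
    (hk : k ∈ Finset.univ \ {i, j}) : i ≠ k ∧ j ≠ k := by
  simpa [eq_comm, not_or] using hk

theorem edge_ne_edge {i j k : Fin n} (hij : i ≠ j) (hik : i ≠ k) (hjk : j ≠ k) :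
    edge i k hik ≠ edge j k hjk := fun he => by
  rcases eq_and_eq_or_eq_and_eq_of_edge_eq he with ⟨h, -⟩ | ⟨h, -⟩
  exacts [hij h, hik h]

theorem Tij_update_of_adj {i j k : Fin n} (hij : i ≠ j) (hik : i ≠ k) (hjk : j ≠ k)
    {ω : Edge n → Bool} (h : ω (edge i k hik) = true) (c : Bool) :
    Tij i j (Function.update ω (edge j k hjk) c) = Tij i j ω := by
  refine Finset.sum_congr rfl fun l hl => ?_
  obtain ⟨hil, hjl⟩ := ne_and_ne_of_mem_univ_sdiff_pair hl
  by_cases hlk : l = k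
  · subst hlk
    have hi : eInd ω i l = 1 := by rw [eInd_eq_toNat ω hil, h]; rfl
    rw [eInd_update_of_ne ω c hil (edge_ne_edge hij hil hjl), hi,
      max_eq_left (eInd_le_one _ _ _), max_eq_left (eInd_le_one _ _ _)]
  · have hj : edge j l hjl ≠ edge j k hjk := fun he => by
      rcases eq_and_eq_or_eq_and_eq_of_edge_eq he with ⟨-, h⟩ | ⟨h, -⟩
      exacts [hlk h, hjk h]
    have hi : edge i l hil ≠ edge j k hjk := fun he => by
      rcases eq_and_eq_or_eq_and_eq_of_edge_eq he with ⟨h, -⟩ | ⟨-, h⟩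
      exacts [hij h, hjl h.symm]
    rw [eInd_update_of_ne ω c hil hi, eInd_update_of_ne ω c hjl hj]

theorem eInd_div_Tij_update {i j k : Fin n} (hij : i ≠ j) (hik : i ≠ k) (hjk : j ≠ k)
    (ω : Edge n → Bool) (c : Bool) :
    (eInd (Function.update ω (edge j k hjk) c) i k : ℝ) /
        Tij i j (Function.update ω (edge j k hjk) c) = eInd ω i k / Tij i j ω := by
  rw [eInd_update_of_ne ω c hik (edge_ne_edge hij hik hjk)]
  cases h : ω (edge i k hik)
  · simp [eInd_eq_toNat ω hik, h]
  · rw [Tij_update_of_adj hij hik hjk h]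

theorem jac_eq_add_sum (p : ℝ) (i j : Fin n) (ω : Edge n → Bool) :
    jac p i j ω = p / (2 - p) + ∑ k ∈ Finset.univ \ {i, j},
      ((eInd ω i k * eInd ω j k : ℝ) - p / (2 - p) * max (eInd ω i k : ℝ) (eInd ω j k)) /
        Tij i j ω := by
  have hS : (Sij i j ω : ℝ) = ∑ k ∈ Finset.univ \ {i, j}, (eInd ω i k * eInd ω j k : ℝ) := by
    simp [Sij]
  have hT : (Tij i j ω : ℝ) = ∑ k ∈ Finset.univ \ {i, j}, max (eInd ω i k : ℝ) (eInd ω j k) := by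
    simp [Tij]
  rw [← Finset.sum_div, Finset.sum_sub_distrib, ← Finset.mul_sum, ← hS, ← hT, jac]
  split_ifs with h
  · simp [h]
  · field_simp
    ring

theorem integral_sub_mul_max_div_Tij {p : ℝ} (hp : p ∈ Set.Ioo (0 : ℝ) 1) {i j k : Fin n}
    (hij : i ≠ j) (hik : i ≠ k) (hjk : j ≠ k) :
    ∫ ω, ((eInd ω i k * eInd ω j k : ℝ) - p / (2 - p) * max (eInd ω i k : ℝ) (eInd ω j k)) /
        Tij i j ω ∂gnp n (ENNReal.ofReal p) (ENNReal.ofReal_le_one.mpr hp.2.le) = 0 := by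
  set μ := gnp n (ENNReal.ofReal p) (ENNReal.ofReal_le_one.mpr hp.2.le)
  have hpμ : (ENNReal.ofReal p).toReal = p := ENNReal.toReal_ofReal hp.1.le
  have hi : ∫ ω, (eInd ω i k * eInd ω j k : ℝ) / Tij i j ω ∂μ
      = p * ∫ ω, (eInd ω i k : ℝ) / Tij i j ω ∂μ := by
    rw [← hpμ, ← integral_toNat_mul_of_update_eq _ (eInd_div_Tij_update hij hik hjk)]
    congr 1 with ω
    rw [eInd_eq_toNat ω hjk]
    ring
  have hj : ∫ ω, (eInd ω i k * eInd ω j k : ℝ) / Tij i j ω ∂μ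
      = p * ∫ ω, (eInd ω j k : ℝ) / Tij i j ω ∂μ := by
    rw [← hpμ, ← integral_toNat_mul_of_update_eq _ fun ω c => by
      simpa only [Tij_comm j i] using eInd_div_Tij_update hij.symm hjk hik ω c]
    congr 1 with ω
    rw [eInd_eq_toNat ω hik]
    ring
  have hsplit : ∀ ω : Edge n → Bool,
      ((eInd ω i k * eInd ω j k : ℝ) - p / (2 - p) * max (eInd ω i k : ℝ) (eInd ω j k)) /
        Tij i j ω = (1 + p / (2 - p)) * ((eInd ω i k * eInd ω j k : ℝ) / Tij i j ω)
          - p / (2 - p) * ((eInd ω i k : ℝ) / Tij i j ω)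
          - p / (2 - p) * ((eInd ω j k : ℝ) / Tij i j ω) := by
    intro ω
    have hmax : max (eInd ω i k : ℝ) (eInd ω j k) =
        eInd ω i k + eInd ω j k - eInd ω i k * eInd ω j k := by
      rw [eInd_eq_toNat ω hik, eInd_eq_toNat ω hjk]
      cases ω (edge i k hik) <;> cases ω (edge j k hjk) <;> norm_num
    rw [hmax]
    ring
  have h2p : 2 - p ≠ 0 := by linarith [hp.2]
  simp_rw [hsplit]
  rw [integral_sub .of_finite .of_finite, integral_sub .of_finite .of_finite, integral_const_mul,
    integral_const_mul, integral_const_mul]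
  field_simp
  linarith

end Gnp

theorem expectation_jaccard_general (n : ℕ) (p : ℝ) (hp : p ∈ Set.Ioo (0 : ℝ) 1)
    (i j : Fin n) (hij : i ≠ j) :
    ∫ ω, jac p i j ω ∂(gnp n (ENNReal.ofReal p) (ENNReal.ofReal_le_one.mpr hp.2.le))
      = p / (2 - p) := by
  simp_rw [Gnp.jac_eq_add_sum]
  rw [integral_add .of_finite .of_finite, integral_const,
    integral_finsetSum _ fun _ _ => .of_finite, Finset.sum_eq_zero fun k hk => ?_]
  · simp
  obtain ⟨hik, hjk⟩ := Gnp.ne_and_ne_of_mem_univ_sdiff_pair hk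
  exact Gnp.integral_sub_mul_max_div_Tij hp hij hik hjk

/-- The expectation of the Jaccard index of any pair of distinct vertices in `G(n,p)`
equals `p/(2-p)`, for all `n ≥ 2` and `p ∈ (0,1)`. -/
theorem expectation_jaccard (n : ℕ) (hn : 2 ≤ n) (p : ℝ) (hp : p ∈ Set.Ioo (0 : ℝ) 1)
    (i j : Fin n) (hij : i ≠ j) :
    ∫ ω, jac p i j ω ∂(gnp n (ENNReal.ofReal p) (ENNReal.ofReal_le_one.mpr hp.2.le))
      = p / (2 - p) :=
  expectation_jaccard_general n p hp i j hij
end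

section
/- The variance of the Jaccard index J_ij in G(n,p) satisfies Var[J_ij] = (2p(1-p)/(2-p)²) · Σ_{m=1}^{n-2} (1/m) P(T_ij = m), where T_ij ~ Bin(n-2, p(2-p)). -/
open MeasureTheory ProbabilityTheory Filter
open scoped ENNReal

/-!
For a vertex `k ∉ {i, j}` let `U_k` and `V_k` indicate that `k` is adjacent to at least one,
respectively to both, of `i` and `j`, so that `T = ∑ U_k` and `S = ∑ V_k`. Resampling the two
edges `ik`, `jk` shows that `E[g V_k] = q E[g U_k]` with `q = p/(2-p)` for every `g` that sees
these two edges only through `U_k`: given `U_k = 1`, both edges are present with probability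
`p² / (p² + 2p(1-p)) = q`. Applied to `g = h(T)` and `g = h(T) Z_l`, this makes the centred
indicators `Z_k = V_k - q U_k` satisfy `E[h(T) Z_k] = 0` and `E[h(T) Z_k Z_l] = 0` for `k ≠ l`,
while `Z_k² = (1 - 2q) Z_k + q(1-q) U_k`. As `J - q = (S - qT)/T` (both sides vanish when
`T = 0`), it follows that `E[J] = q` and `Var[J] = q(1-q) E[1/T]`, where `1/0 = 0`.
-/

open Finset Function

section Resampling

variable {E : Type*}

def FactorsThroughOr {β : Type*} (e₁ e₂ : E) (g : (E → Bool) → β) : Prop :=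
  ∀ ω ω' : E → Bool, (∀ e, e ≠ e₁ → e ≠ e₂ → ω e = ω' e) →
    (ω e₁ || ω e₂) = (ω' e₁ || ω' e₂) → g ω = g ω'

lemma FactorsThroughOr.comp {β γ : Type*} {e₁ e₂ : E} {g : (E → Bool) → β}
    (hg : FactorsThroughOr e₁ e₂ g) (h : β → γ) : FactorsThroughOr e₁ e₂ (fun ω => h (g ω)) :=
  fun ω ω' hω hor => congrArg h (hg ω ω' hω hor)

lemma FactorsThroughOr.mul {β : Type*} [Mul β] {e₁ e₂ : E} {f g : (E → Bool) → β}
    (hf : FactorsThroughOr e₁ e₂ f) (hg : FactorsThroughOr e₁ e₂ g) :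
    FactorsThroughOr e₁ e₂ (fun ω => f ω * g ω) :=
  fun ω ω' hω hor => congrArg₂ (· * ·) (hf ω ω' hω hor) (hg ω ω' hω hor)

variable [DecidableEq E]

lemma update_funSplitAt_symm (e : E) (b c : Bool) (ρ : {x // x ≠ e} → Bool) :
    update ((Equiv.funSplitAt e Bool).symm (c, ρ)) e b = (Equiv.funSplitAt e Bool).symm (b, ρ) := by
  ext x
  by_cases h : x = e
  · subst h; simp [Equiv.funSplitAt_symm_apply]
  · simp [Equiv.funSplitAt_symm_apply, h]

variable (p : ℝ)

def bernoulliWeight (b : Bool) : ℝ := if b then p else 1 - p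

lemma sum_bernoulliWeight : ∑ b, bernoulliWeight p b = 1 := by
  simp [bernoulliWeight]

variable [Fintype E]

def configWeight (ω : E → Bool) : ℝ := ∏ e, bernoulliWeight p (ω e)

lemma configWeight_funSplitAt_symm (e : E) (c : Bool) (ρ : {x // x ≠ e} → Bool) :
    configWeight p ((Equiv.funSplitAt e Bool).symm (c, ρ))
      = bernoulliWeight p c * ∏ x, bernoulliWeight p (ρ x) := by
  rw [configWeight, Fintype.prod_eq_mul_prod_subtype_ne _ e]
  congr 1
  · simp [Equiv.funSplitAt_symm_apply]
  · exact prod_congr rfl fun x _ => by simp [Equiv.funSplitAt_symm_apply, x.2]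

lemma sum_configWeight_mul_resample (e : E) (F : (E → Bool) → ℝ) :
    ∑ ω, configWeight p ω * ∑ b, bernoulliWeight p b * F (update ω e b)
      = ∑ ω, configWeight p ω * F ω := by
  rw [← (Equiv.funSplitAt e Bool).symm.sum_comp, ← (Equiv.funSplitAt e Bool).symm.sum_comp,
    Fintype.sum_prod_type, Fintype.sum_prod_type]
  simp only [configWeight_funSplitAt_symm, update_funSplitAt_symm, mul_assoc, ← Finset.mul_sum]
  rw [← Finset.sum_mul, sum_bernoulliWeight, one_mul]
  simp only [Finset.mul_sum, mul_left_comm]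
  exact Finset.sum_comm

lemma sum_configWeight_mul_resample_two (e₁ e₂ : E) (F : (E → Bool) → ℝ) :
    ∑ ω, configWeight p ω * ∑ b, bernoulliWeight p b *
        ∑ c, bernoulliWeight p c * F (update (update ω e₁ b) e₂ c)
      = ∑ ω, configWeight p ω * F ω := by
  rw [sum_configWeight_mul_resample p e₁ fun ω => ∑ c, bernoulliWeight p c * F (update ω e₂ c),
    sum_configWeight_mul_resample]

theorem sum_configWeight_mul_and_eq {e₁ e₂ : E} (hne : e₁ ≠ e₂) {g : (E → Bool) → ℝ}
    (hg : FactorsThroughOr e₁ e₂ g) :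
    (2 - p) * ∑ ω, configWeight p ω * (g ω * if ω e₁ && ω e₂ then 1 else 0)
      = p * ∑ ω, configWeight p ω * (g ω * if ω e₁ || ω e₂ then 1 else 0) := by
  rw [← sum_configWeight_mul_resample_two p e₁ e₂ fun ω => g ω * if ω e₁ && ω e₂ then 1 else 0,
    ← sum_configWeight_mul_resample_two p e₁ e₂ fun ω => g ω * if ω e₁ || ω e₂ then 1 else 0,
    Finset.mul_sum, Finset.mul_sum]
  refine Finset.sum_congr rfl fun ω _ => ?_
  have hG : ∀ b c : Bool, (b || c) = true →
      g (update (update ω e₁ b) e₂ c) = g (update (update ω e₁ true) e₂ true) := by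
    intro b c hbc
    refine hg _ _ (fun e h₁ h₂ => ?_) ?_
    · simp [update_of_ne h₁, update_of_ne h₂]
    · simp [update_of_ne hne, hbc]
  simp only [update_self, update_of_ne hne, Fintype.sum_bool]
  simp [hG, bernoulliWeight]
  ring

end Resampling

abbrev GraphConfig (n : ℕ) := {e : Fin n × Fin n // e.1 < e.2} → Bool

instance isProbabilityMeasure_gnp {n : ℕ} (p : ℝ≥0∞) (hp : p ≤ 1) :
    IsProbabilityMeasure (gnp n p hp) := by
  unfold gnp; infer_instance

set_option linter.deprecated false in
lemma measureReal_gnp_singleton {n : ℕ} (p : ℝ≥0∞) (hp : p ≤ 1)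
    (ω : GraphConfig n) :
    (gnp n p hp).real {ω} = configWeight p.toReal ω := by
  rw [measureReal_def, gnp, Measure.pi_singleton, ENNReal.toReal_prod]
  refine Finset.prod_congr rfl fun e _ => ?_
  erw [PMF.toMeasure_apply_singleton _ _ (measurableSet_singleton _), PMF.bernoulli_apply]
  have hp_top : p ≠ ⊤ := ne_top_of_le_ne_top ENNReal.one_ne_top hp
  cases ω e
  · simp [bernoulliWeight, ENNReal.coe_toNNReal hp_top, ENNReal.toReal_sub_of_le hp ENNReal.one_ne_top]
  · simp [bernoulliWeight, ENNReal.coe_toNNReal hp_top]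

lemma integral_gnp {n : ℕ} (p : ℝ≥0∞) (hp : p ≤ 1)
    (f : GraphConfig n → ℝ) :
    ∫ ω, f ω ∂gnp n p hp = ∑ ω, configWeight p.toReal ω * f ω := by
  rw [integral_fintype .of_finite]
  simp [measureReal_gnp_singleton]

lemma integral_comp_eq_sum_mul_measureReal {Ω α : Type*} [MeasurableSpace Ω]
    [MeasurableSingletonClass Ω] [Finite Ω] (μ : Measure Ω) [IsFiniteMeasure μ] (X : Ω → α)
    (f : α → ℝ) (s : Finset α) (hX : ∀ ω, X ω ∉ s → f (X ω) = 0) :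
    ∫ ω, f (X ω) ∂μ = ∑ a ∈ s, f a * μ.real {ω | X ω = a} := by
  classical
  have hf : ∀ ω, f (X ω) = ∑ a ∈ s, {ω | X ω = a}.indicator (fun _ => f a) ω := by
    intro ω
    by_cases h : X ω ∈ s
    · simp [Set.indicator, h]
    · simp [Set.indicator, h, hX ω h]
  simp_rw [hf]
  rw [integral_finsetSum _ fun _ _ => .of_finite]
  simp [integral_indicator_const _ (.of_discrete), mul_comm]

section Graph

variable {n : ℕ} {i j k : Fin n}

def edge (i k : Fin n) (h : i ≠ k) : {e : Fin n × Fin n // e.1 < e.2} :=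
  if h' : i < k then ⟨(i, k), h'⟩ else ⟨(k, i), h.lt_or_gt.resolve_left h'⟩

lemma edge_eq_edge_iff {a b c d : Fin n} (h : a ≠ b) (h' : c ≠ d) :
    edge a b h = edge c d h' ↔ (a = c ∧ b = d) ∨ (a = d ∧ b = c) := by
  unfold edge
  have := h.lt_or_gt
  have := h'.lt_or_gt
  split_ifs <;> simp only [Subtype.mk.injEq, Prod.mk.injEq] <;> omega

lemma eInd_eq_ite (ω : GraphConfig n) (h : i ≠ k) :
    eInd ω i k = if ω (edge i k h) then 1 else 0 := by
  unfold eInd edge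
  rcases h.lt_or_gt with h' | h'
  · simp [h']
  · simp [h', not_lt.2 h'.le]

def commonInd (i j k : Fin n) (ω : GraphConfig n) : ℝ :=
  ((eInd ω i k * eInd ω j k : ℕ) : ℝ)

def unionInd (i j k : Fin n) (ω : GraphConfig n) : ℝ :=
  ((max (eInd ω i k) (eInd ω j k) : ℕ) : ℝ)

def centredInd (q : ℝ) (i j k : Fin n) (ω : GraphConfig n) : ℝ :=
  commonInd i j k ω - q * unionInd i j k ω

lemma mem_sdiff_pair_iff : k ∈ univ \ {i, j} ↔ i ≠ k ∧ j ≠ k := by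
  simp [eq_comm]

section Pointwise

variable (ω : GraphConfig n)

lemma eInd_le_one (i k : Fin n) : eInd ω i k ≤ 1 := by
  unfold eInd
  split_ifs <;> simp

lemma commonInd_eq_ite (hik : i ≠ k) (hjk : j ≠ k) :
    commonInd i j k ω = if ω (edge i k hik) && ω (edge j k hjk) then 1 else 0 := by
  rw [commonInd, eInd_eq_ite ω hik, eInd_eq_ite ω hjk]
  cases ω (edge i k hik) <;> cases ω (edge j k hjk) <;> simp

lemma unionInd_eq_ite (hik : i ≠ k) (hjk : j ≠ k) :
    unionInd i j k ω = if ω (edge i k hik) || ω (edge j k hjk) then 1 else 0 := by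
  rw [unionInd, eInd_eq_ite ω hik, eInd_eq_ite ω hjk]
  cases ω (edge i k hik) <;> cases ω (edge j k hjk) <;> simp

lemma centredInd_sq (q : ℝ) (hik : i ≠ k) (hjk : j ≠ k) :
    centredInd q i j k ω ^ 2
      = (1 - 2 * q) * centredInd q i j k ω + q * (1 - q) * unionInd i j k ω := by
  rw [centredInd, commonInd_eq_ite ω hik hjk, unionInd_eq_ite ω hik hjk]
  cases ω (edge i k hik) <;> cases ω (edge j k hjk) <;> norm_num <;> ring

lemma cast_Sij (i j : Fin n) : (Sij i j ω : ℝ) = ∑ k ∈ univ \ {i, j}, commonInd i j k ω :=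
  Nat.cast_sum _ _

lemma cast_Tij (i j : Fin n) : (Tij i j ω : ℝ) = ∑ k ∈ univ \ {i, j}, unionInd i j k ω :=
  Nat.cast_sum _ _

lemma Sij_sub_mul_Tij (q : ℝ) (i j : Fin n) :
    (Sij i j ω : ℝ) - q * Tij i j ω = ∑ k ∈ univ \ {i, j}, centredInd q i j k ω := by
  simp only [cast_Sij, cast_Tij, centredInd, Finset.sum_sub_distrib, Finset.mul_sum]

lemma Sij_eq_zero_of_Tij_eq_zero (i j : Fin n) (h : Tij i j ω = 0) : Sij i j ω = 0 := by
  rw [Tij, Finset.sum_eq_zero_iff] at h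
  exact Finset.sum_eq_zero fun k hk => by simp [Nat.max_eq_zero_iff.1 (h k hk)]

lemma Tij_le (hij : i ≠ j) : Tij i j ω ≤ n - 2 := by
  calc Tij i j ω ≤ ∑ _k ∈ univ \ {i, j}, 1 :=
        Finset.sum_le_sum fun k _ => max_le (eInd_le_one ω i k) (eInd_le_one ω j k)
    _ = n - 2 := by simp [Finset.card_sdiff, hij]

lemma jac_eq (p : ℝ) (i j : Fin n) :
    jac p i j ω = p / (2 - p) + (Tij i j ω : ℝ)⁻¹ * (Sij i j ω - p / (2 - p) * Tij i j ω) := by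
  unfold jac
  split_ifs with h
  · simp [h, Sij_eq_zero_of_Tij_eq_zero ω i j h]
  · field_simp
    ring

end Pointwise

lemma eInd_factorsThroughOr (hik : i ≠ k) (hjk : j ≠ k) {a l : Fin n} (hal : a ≠ l)
    (hil : i ≠ l) (hjl : j ≠ l) (hlk : l ≠ k) :
    FactorsThroughOr (edge i k hik) (edge j k hjk) (fun ω => eInd ω a l) := by
  intro ω ω' hω _
  dsimp only
  rw [eInd_eq_ite ω hal, eInd_eq_ite ω' hal, hω]
  · rw [Ne, edge_eq_edge_iff]; tauto
  · rw [Ne, edge_eq_edge_iff]; tauto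

lemma centredInd_factorsThroughOr (q : ℝ) (hik : i ≠ k) (hjk : j ≠ k) {l : Fin n}
    (hil : i ≠ l) (hjl : j ≠ l) (hlk : l ≠ k) :
    FactorsThroughOr (edge i k hik) (edge j k hjk) (centredInd q i j l) := by
  intro ω ω' hω hor
  have hi := eInd_factorsThroughOr hik hjk hil hil hjl hlk ω ω' hω hor
  have hj := eInd_factorsThroughOr hik hjk hjl hil hjl hlk ω ω' hω hor
  simp only [centredInd, commonInd, unionInd, hi, hj]

lemma Tij_factorsThroughOr (hik : i ≠ k) (hjk : j ≠ k) :
    FactorsThroughOr (edge i k hik) (edge j k hjk) (Tij i j) := by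
  intro ω ω' hω hor
  refine Finset.sum_congr rfl fun l hl => ?_
  rw [mem_sdiff_pair_iff] at hl
  by_cases hlk : l = k
  · subst hlk
    simp only [eInd_eq_ite _ hik, eInd_eq_ite _ hjk]
    revert hor
    cases ω (edge i l hik) <;> cases ω (edge j l hjk) <;>
      cases ω' (edge i l hik) <;> cases ω' (edge j l hjk) <;> simp
  · have hi : eInd ω i l = eInd ω' i l :=
      eInd_factorsThroughOr hik hjk hl.1 hl.1 hl.2 hlk ω ω' hω hor
    have hj : eInd ω j l = eInd ω' j l :=
      eInd_factorsThroughOr hik hjk hl.2 hl.1 hl.2 hlk ω ω' hω hor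
    rw [hi, hj]

end Graph

section Moments

variable {n : ℕ} (p : ℝ≥0∞) (hp : p ≤ 1) {i j : Fin n}

lemma integral_mul_centredInd_eq_zero (hij : i ≠ j) {k : Fin n} (hik : i ≠ k) (hjk : j ≠ k)
    {g : GraphConfig n → ℝ}
    (hg : FactorsThroughOr (edge i k hik) (edge j k hjk) g) :
    ∫ ω, g ω * centredInd (p.toReal / (2 - p.toReal)) i j k ω ∂gnp n p hp = 0 := by
  have hp_le : p.toReal ≤ 1 := ENNReal.toReal_le_of_le_ofReal zero_le_one (by simpa using hp)
  have key := sum_configWeight_mul_and_eq p.toReal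
    (by rw [Ne, edge_eq_edge_iff]; tauto : edge i k hik ≠ edge j k hjk) hg
  rw [integral_gnp]
  simp only [centredInd, commonInd_eq_ite _ hik hjk, unionInd_eq_ite _ hik hjk, mul_sub,
    Finset.sum_sub_distrib, mul_left_comm _ (p.toReal / (2 - p.toReal)), ← Finset.mul_sum]
  rw [sub_eq_zero, div_mul_eq_mul_div, eq_div_iff (by linarith)]
  linarith

lemma integral_comp_Tij_mul_Sij_sub_eq_zero (hij : i ≠ j) (h : ℕ → ℝ) :
    ∫ ω, h (Tij i j ω) * ((Sij i j ω : ℝ) - p.toReal / (2 - p.toReal) * Tij i j ω) ∂gnp n p hp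
      = 0 := by
  simp_rw [Sij_sub_mul_Tij, Finset.mul_sum]
  rw [integral_finsetSum _ fun _ _ => .of_finite]
  refine Finset.sum_eq_zero fun k hk => ?_
  rw [mem_sdiff_pair_iff] at hk
  exact integral_mul_centredInd_eq_zero p hp hij hk.1 hk.2
    ((Tij_factorsThroughOr _ _).comp h)

lemma integral_comp_Tij_mul_Sij_sub_sq (hij : i ≠ j) (h : ℕ → ℝ) :
    ∫ ω, h (Tij i j ω) * ((Sij i j ω : ℝ) - p.toReal / (2 - p.toReal) * Tij i j ω) ^ 2
        ∂gnp n p hp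
      = p.toReal / (2 - p.toReal) * (1 - p.toReal / (2 - p.toReal)) *
          ∫ ω, h (Tij i j ω) * Tij i j ω ∂gnp n p hp := by
  set q := p.toReal / (2 - p.toReal)
  have diag : ∀ k ∈ univ \ {i, j},
      ∫ ω, h (Tij i j ω) * (centredInd q i j k ω * centredInd q i j k ω) ∂gnp n p hp
        = q * (1 - q) * ∫ ω, h (Tij i j ω) * unionInd i j k ω ∂gnp n p hp := by
    intro k hk
    obtain ⟨hik, hjk⟩ := mem_sdiff_pair_iff.1 hk
    simp_rw [← sq, centredInd_sq _ q hik hjk, mul_add, mul_left_comm _ (1 - 2 * q),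
      mul_left_comm _ (q * (1 - q))]
    rw [integral_add .of_finite .of_finite, integral_const_mul, integral_const_mul,
      integral_mul_centredInd_eq_zero p hp hij hik hjk ((Tij_factorsThroughOr _ _).comp h)]
    ring
  have off_diag : ∀ k ∈ univ \ {i, j}, ∀ l ∈ univ \ {i, j}, l ≠ k →
      ∫ ω, h (Tij i j ω) * (centredInd q i j k ω * centredInd q i j l ω) ∂gnp n p hp = 0 := by
    intro k hk l hl hlk
    obtain ⟨hik, hjk⟩ := mem_sdiff_pair_iff.1 hk
    obtain ⟨hil, hjl⟩ := mem_sdiff_pair_iff.1 hl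
    simp_rw [← mul_assoc]
    exact integral_mul_centredInd_eq_zero p hp hij hil hjl
      (((Tij_factorsThroughOr _ _).comp h).mul (centredInd_factorsThroughOr q hil hjl hik hjk
        (Ne.symm hlk)))
  calc ∫ ω, h (Tij i j ω) * ((Sij i j ω : ℝ) - q * Tij i j ω) ^ 2 ∂gnp n p hp
      = ∑ k ∈ univ \ {i, j}, ∑ l ∈ univ \ {i, j},
          ∫ ω, h (Tij i j ω) * (centredInd q i j k ω * centredInd q i j l ω) ∂gnp n p hp := by
        simp_rw [Sij_sub_mul_Tij, sq, Finset.sum_mul_sum, Finset.mul_sum]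
        rw [integral_finsetSum _ fun _ _ => .of_finite]
        exact Finset.sum_congr rfl fun _ _ => integral_finsetSum _ fun _ _ => .of_finite
    _ = ∑ k ∈ univ \ {i, j}, q * (1 - q) * ∫ ω, h (Tij i j ω) * unionInd i j k ω ∂gnp n p hp :=
        Finset.sum_congr rfl fun k hk => by
          rw [Finset.sum_eq_single_of_mem k hk (off_diag k hk), diag k hk]
    _ = q * (1 - q) * ∫ ω, h (Tij i j ω) * Tij i j ω ∂gnp n p hp := by
        rw [← Finset.mul_sum, ← integral_finsetSum _ fun _ _ => .of_finite]
        simp_rw [cast_Tij, Finset.mul_sum]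

lemma integral_inv_Tij (μ : Measure (GraphConfig n)) [IsFiniteMeasure μ] (hij : i ≠ j) :
    ∫ ω, (Tij i j ω : ℝ)⁻¹ ∂μ = ∑ m ∈ Icc 1 (n - 2), (m : ℝ)⁻¹ * μ.real {ω | Tij i j ω = m} := by
  refine integral_comp_eq_sum_mul_measureReal μ (Tij i j) (fun t => (t : ℝ)⁻¹) _ fun ω hω => ?_
  have hT : Tij i j ω = 0 := by
    have := Tij_le ω hij
    rw [Finset.mem_Icc] at hω
    omega
  simp [hT]

end Moments

theorem variance_jaccard_general (n : ℕ) (p : ℝ) (hp : p ∈ Set.Ioo (0 : ℝ) 1)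
    (i j : Fin n) (hij : i ≠ j) :
    variance (jac p i j) (gnp n (ENNReal.ofReal p) (ENNReal.ofReal_le_one.mpr hp.2.le))
      = (2 * p * (1 - p) / (2 - p) ^ 2) *
          ∑ m ∈ Finset.Icc 1 (n - 2), (1 / (m : ℝ)) *
            (gnp n (ENNReal.ofReal p) (ENNReal.ofReal_le_one.mpr hp.2.le)
              {ω | Tij i j ω = m}).toReal := by
  set μ := gnp n (ENNReal.ofReal p) (ENNReal.ofReal_le_one.mpr hp.2.le)
  have hp_toReal : (ENNReal.ofReal p).toReal = p := ENNReal.toReal_ofReal hp.1.le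
  have h_first := integral_comp_Tij_mul_Sij_sub_eq_zero _ (ENNReal.ofReal_le_one.mpr hp.2.le) hij
    fun t => (t : ℝ)⁻¹
  have h_second := integral_comp_Tij_mul_Sij_sub_sq _ (ENNReal.ofReal_le_one.mpr hp.2.le) hij
    fun t => (t : ℝ)⁻¹ ^ 2
  rw [hp_toReal] at h_first h_second
  have h_mean : μ[jac p i j] = p / (2 - p) := by
    simp_rw [jac_eq]
    rw [integral_add .of_finite .of_finite, h_first]
    simp
  have h_inv : ∀ t : ℝ, t⁻¹ ^ 2 * t = t⁻¹ := fun t => by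
    rcases eq_or_ne t 0 with rfl | ht
    · simp
    · field_simp
  rw [variance_eq_integral .of_discrete, h_mean]
  simp_rw [jac_eq, add_sub_cancel_left, mul_pow]
  rw [h_second]
  simp_rw [h_inv]
  rw [integral_inv_Tij μ hij]
  have h2p : 2 - p ≠ 0 := by linarith [hp.2]
  simp only [measureReal_def, one_div]
  field_simp
  ring

/-- The variance of the Jaccard index `J_ij` in `G(n,p)` equals
`(2p(1-p)/(2-p)²) · Σ_{m=1}^{n-2} (1/m) P(T_ij = m)`. -/
theorem variance_jaccard (n : ℕ) (hn : 3 ≤ n) (p : ℝ) (hp : p ∈ Set.Ioo (0 : ℝ) 1)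
    (i j : Fin n) (hij : i ≠ j) :
    variance (jac p i j) (gnp n (ENNReal.ofReal p) (ENNReal.ofReal_le_one.mpr hp.2.le))
      = (2 * p * (1 - p) / (2 - p) ^ 2) *
          ∑ m ∈ Finset.Icc 1 (n - 2), (1 / (m : ℝ)) *
            (gnp n (ENNReal.ofReal p) (ENNReal.ofReal_le_one.mpr hp.2.le)
              {ω | Tij i j ω = m}).toReal :=
  variance_jaccard_general n p hp i j hij
end

section
/- Let X_n ~ Bin(n, p_n) with n·p_n → ∞. Then for any fixed constants a ≥ 0 and b > 0, E[((n+a)p_n/(b+X_n) − 1)²] = O(1/(n·p_n)) as n → ∞. -/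
open MeasureTheory Filter
open scoped ENNReal

/-- `μ` is the distribution of a `Bin(n, p)` random variable: a probability measure on `ℕ`
with `μ {k} = C(n,k) p^k (1-p)^(n-k)`. -/
def IsBinomial (μ : Measure ℕ) (n : ℕ) (p : ℝ) : Prop :=
  IsProbabilityMeasure μ ∧
    ∀ k : ℕ, μ {k} = ENNReal.ofReal ((n.choose k : ℝ) * p ^ k * (1 - p) ^ (n - k))

/-! Write `m = n p`. The integrand is at most `2 ((X - m)² + c) / (b + X)²` for a constant `c`.
On `{X ≥ m / 2}` the denominator is at least `m² / 4`, and the binomial variance `m (1 - p)`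
gives `O(1/m)`. On `{X < m / 2}` the integrand is `O(m²)`, while the Chernoff bound
`P(X < m / 2) ≤ e^{m/2} E[e^{-X}] ≤ e^{-(1/2 - e⁻¹) m}` makes this contribution `O(1/m)` too. -/

open Finset Real

def binomialWeight (n : ℕ) (p : ℝ) (k : ℕ) : ℝ :=
  (n.choose k : ℝ) * p ^ k * (1 - p) ^ (n - k)

section binomialWeight

variable {n : ℕ} {p : ℝ}

lemma binomialWeight_nonneg (hp₀ : 0 ≤ p) (hp₁ : p ≤ 1) (k : ℕ) : 0 ≤ binomialWeight n p k := by
  unfold binomialWeight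
  have : 0 ≤ 1 - p := by linarith
  positivity

lemma binomialWeight_eq_eval_bernsteinPolynomial (k : ℕ) :
    binomialWeight n p k = (bernsteinPolynomial ℝ n k).eval p := by
  simp [binomialWeight, bernsteinPolynomial]

lemma sum_binomialWeight : ∑ k ∈ range (n + 1), binomialWeight n p k = 1 := by
  simpa [binomialWeight_eq_eval_bernsteinPolynomial, Polynomial.eval_finsetSum]
    using congrArg (Polynomial.eval p) (bernsteinPolynomial.sum ℝ n)

lemma sum_binomialWeight_mul_sq_sub :
    ∑ k ∈ range (n + 1), binomialWeight n p k * ((k : ℝ) - n * p) ^ 2 = n * p * (1 - p) := by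
  have h := congrArg (Polynomial.eval p) (bernsteinPolynomial.variance ℝ n)
  simp only [Polynomial.eval_finsetSum, Polynomial.eval_mul, Polynomial.eval_pow,
    Polynomial.eval_sub, Polynomial.eval_X, Polynomial.eval_natCast,
    Polynomial.eval_one, nsmul_eq_mul, ← binomialWeight_eq_eval_bernsteinPolynomial] at h
  rw [← h]
  refine sum_congr rfl fun k _ => ?_
  ring

lemma sum_binomialWeight_mul_pow (z : ℝ) :
    ∑ k ∈ range (n + 1), binomialWeight n p k * z ^ k = (p * z + (1 - p)) ^ n := by
  rw [add_pow]
  refine sum_congr rfl fun k _ => ?_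
  rw [binomialWeight, mul_pow]
  ring

lemma sum_binomialWeight_mul_exp_le (hp₀ : 0 ≤ p) (hp₁ : p ≤ 1) (t : ℝ) :
    ∑ k ∈ range (n + 1), binomialWeight n p k * exp (t * k)
      ≤ exp (n * p * (exp t - 1)) := by
  have hbase₀ : 0 ≤ p * exp t + (1 - p) := by have := exp_pos t; nlinarith
  have hbase : p * exp t + (1 - p) ≤ exp (p * (exp t - 1)) := by
    linarith [add_one_le_exp (p * (exp t - 1))]
  calc ∑ k ∈ range (n + 1), binomialWeight n p k * exp (t * k)
      = (p * exp t + (1 - p)) ^ n := by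
        simp only [mul_comm t, exp_nat_mul, sum_binomialWeight_mul_pow]
    _ ≤ exp (p * (exp t - 1)) ^ n := pow_le_pow_left₀ hbase₀ hbase n
    _ = exp (n * p * (exp t - 1)) := by rw [← exp_nat_mul, mul_assoc]

end binomialWeight

lemma IsBinomial.integral_eq_sum {μ : Measure ℕ} {n : ℕ} {p : ℝ} (h : IsBinomial μ n p)
    (hp₀ : 0 ≤ p) (hp₁ : p ≤ 1) (f : ℕ → ℝ) :
    ∫ k, f k ∂μ = ∑ k ∈ range (n + 1), binomialWeight n p k * f k := by
  have := h.1
  have hsupp : ∀ᵐ k ∂μ, k ∉ (range (n + 1) : Set ℕ) → f k = 0 := by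
    refine ae_iff_of_countable.2 fun k hk hkn => absurd ?_ hk
    rw [h.2, Nat.choose_eq_zero_of_lt (by simpa using hkn)]
    simp
  rw [← setIntegral_eq_integral_of_ae_compl_eq_zero hsupp, setIntegral_finset _ .finset]
  refine sum_congr rfl fun k _ => ?_
  rw [measureReal_def, show μ {k} = ENNReal.ofReal (binomialWeight n p k) from h.2 k,
    ENNReal.toReal_ofReal (binomialWeight_nonneg hp₀ hp₁ k), smul_eq_mul]

lemma div_sub_one_sq_le {m d b x c : ℝ} (hbx : 0 < b + x) (hc : (d - b) ^ 2 ≤ c) :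
    ((m + d) / (b + x) - 1) ^ 2 ≤ 2 * (((x - m) ^ 2 + c) / (b + x) ^ 2) := by
  have hnum : (m + d - (b + x)) ^ 2 ≤ 2 * ((x - m) ^ 2 + c) := by
    nlinarith [sq_nonneg ((m - x) - (d - b))]
  rw [div_sub_one hbx.ne', div_pow, mul_div_assoc']
  gcongr

/-- Splitting at `x = m / 2`: above it `b + x ≥ m / 2`, below it `exp (m / 2 - x) ≥ 1`
and `(x - m) ^ 2 ≤ m ^ 2`. -/
lemma sq_sub_add_div_sq_le {m b x c : ℝ} (hm : 0 < m) (hb : 0 < b) (hx : 0 ≤ x) (hc : 0 ≤ c) :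
    ((x - m) ^ 2 + c) / (b + x) ^ 2
      ≤ 4 * ((x - m) ^ 2 + c) / m ^ 2 + (m ^ 2 + c) / b ^ 2 * exp (m / 2 - x) := by
  rcases le_or_gt (m / 2) x with hmx | hxm
  · calc ((x - m) ^ 2 + c) / (b + x) ^ 2 ≤ ((x - m) ^ 2 + c) / (m / 2) ^ 2 := by
          gcongr; linarith
      _ = 4 * ((x - m) ^ 2 + c) / m ^ 2 := by field_simp; ring
      _ ≤ _ := le_add_of_nonneg_right (by positivity)
  · have hnum : (x - m) ^ 2 ≤ m ^ 2 := by nlinarith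
    have hden : b ^ 2 ≤ (b + x) ^ 2 := by nlinarith
    calc ((x - m) ^ 2 + c) / (b + x) ^ 2 ≤ (m ^ 2 + c) / b ^ 2 := by gcongr
      _ ≤ (m ^ 2 + c) / b ^ 2 * exp (m / 2 - x) :=
          le_mul_of_one_le_right (by positivity) (one_le_exp (by linarith))
      _ ≤ _ := le_add_of_nonneg_left (by positivity)

lemma sq_mul_exp_neg_mul_le {δ m : ℝ} (hδ : 0 < δ) (hm : 0 < m) :
    m ^ 2 * exp (-(δ * m)) ≤ 6 / δ ^ 3 / m := by
  have h := pow_div_factorial_le_exp _ (mul_pos hδ hm).le 3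
  rw [show ((Nat.factorial 3 : ℕ) : ℝ) = 6 by norm_num [Nat.factorial],
    div_le_iff₀ (by norm_num)] at h
  rw [exp_neg, ← div_eq_mul_inv, div_le_div_iff₀ (exp_pos _) hm, div_mul_eq_mul_div,
    le_div_iff₀ (by positivity)]
  nlinarith

lemma exp_half_mul_sum_binomialWeight_mul_exp_neg_le {n : ℕ} {p : ℝ} (hp₀ : 0 ≤ p)
    (hp₁ : p ≤ 1) :
    exp (n * p / 2) * ∑ k ∈ range (n + 1), binomialWeight n p k * exp (-1 * k)
      ≤ exp (-((1 / 2 - exp (-1)) * (n * p))) :=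
  calc exp (n * p / 2) * ∑ k ∈ range (n + 1), binomialWeight n p k * exp (-1 * k)
      ≤ exp (n * p / 2) * exp (n * p * (exp (-1) - 1)) := by
        gcongr
        exact sum_binomialWeight_mul_exp_le hp₀ hp₁ (-1)
    _ = exp (-((1 / 2 - exp (-1)) * (n * p))) := by
        rw [← exp_add]
        ring_nf

lemma sum_binomialWeight_mul_div_sq_le {n : ℕ} {p b c : ℝ} (hp₁ : p ≤ 1) (hb : 0 < b)
    (hm : 1 ≤ n * p) (hc : 0 ≤ c) :
    ∑ k ∈ range (n + 1), binomialWeight n p k * ((((k : ℝ) - n * p) ^ 2 + c) / (b + k) ^ 2)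
      ≤ (1 + c) * (4 + 6 / (b ^ 2 * (1 / 2 - exp (-1)) ^ 3)) / (n * p) := by
  have hp₀ : 0 ≤ p := by nlinarith [(n.cast_nonneg : (0 : ℝ) ≤ n)]
  set m : ℝ := n * p
  set δ : ℝ := 1 / 2 - exp (-1)
  have hm₀ : 0 < m := by linarith
  have hδ : 0 < δ := sub_pos.2 exp_neg_one_lt_half
  calc ∑ k ∈ range (n + 1), binomialWeight n p k * ((((k : ℝ) - m) ^ 2 + c) / (b + k) ^ 2)
      ≤ ∑ k ∈ range (n + 1), binomialWeight n p k * (4 / m ^ 2 * ((k : ℝ) - m) ^ 2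
          + 4 * c / m ^ 2 + (m ^ 2 + c) / b ^ 2 * exp (m / 2) * exp (-1 * k)) := by
        refine sum_le_sum fun k _ =>
          mul_le_mul_of_nonneg_left ?_ (binomialWeight_nonneg hp₀ hp₁ k)
        refine (sq_sub_add_div_sq_le hm₀ hb k.cast_nonneg hc).trans_eq ?_
        rw [sub_eq_add_neg (m / 2), exp_add, neg_one_mul]
        ring
    _ = 4 / m ^ 2 * ∑ k ∈ range (n + 1), binomialWeight n p k * ((k : ℝ) - m) ^ 2
          + 4 * c / m ^ 2 * ∑ k ∈ range (n + 1), binomialWeight n p k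
          + (m ^ 2 + c) / b ^ 2 * exp (m / 2)
            * ∑ k ∈ range (n + 1), binomialWeight n p k * exp (-1 * k) := by
        simp only [mul_sum, ← sum_add_distrib]
        exact sum_congr rfl fun k _ => by ring
    _ ≤ 4 / m ^ 2 * (m * (1 - p)) + 4 * c / m ^ 2 * 1
          + (m ^ 2 + c) / b ^ 2 * exp (-(δ * m)) := by
        rw [sum_binomialWeight_mul_sq_sub, sum_binomialWeight, mul_assoc _ (exp _)]
        gcongr
        exact exp_half_mul_sum_binomialWeight_mul_exp_neg_le hp₀ hp₁
    _ ≤ 4 / m + 4 * c / m + (1 + c) / b ^ 2 * (m ^ 2 * exp (-(δ * m))) := by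
        gcongr ?_ + ?_ + ?_
        · rw [show 4 / m ^ 2 * (m * (1 - p)) = 4 * (1 - p) / m by field_simp]
          gcongr; linarith
        · rw [mul_one]; gcongr; nlinarith
        · have hm₂ : 1 ≤ m ^ 2 := by nlinarith
          calc (m ^ 2 + c) / b ^ 2 * exp (-(δ * m))
              ≤ (1 + c) * m ^ 2 / b ^ 2 * exp (-(δ * m)) := by
                gcongr; nlinarith [mul_le_mul_of_nonneg_left hm₂ hc]
            _ = _ := by ring
    _ ≤ 4 / m + 4 * c / m + (1 + c) / b ^ 2 * (6 / δ ^ 3 / m) := by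
        gcongr
        exact sq_mul_exp_neg_mul_le hδ hm₀
    _ = (1 + c) * (4 + 6 / (b ^ 2 * δ ^ 3)) / m := by
        field_simp

theorem binomial_inverse_moment_bound_general (p : ℕ → ℝ) (hp : ∀ n, p n ∈ Set.Ioo (0 : ℝ) 1)
    (μ : ℕ → Measure ℕ) (hμ : ∀ n, IsBinomial (μ n) n (p n))
    (hnp : Tendsto (fun n : ℕ => (n : ℝ) * p n) atTop atTop)
    (a b : ℝ) (hb : 0 < b) :
    ∃ C : ℝ, ∃ N : ℕ, ∀ n ≥ N,
      ∫ x, (((n : ℝ) + a) * p n / (b + (x : ℝ)) - 1) ^ 2 ∂(μ n)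
        ≤ C / ((n : ℝ) * p n) := by
  obtain ⟨N, hN⟩ := eventually_atTop.1 (hnp.eventually_ge_atTop 1)
  set c : ℝ := (|a| + b) ^ 2
  refine ⟨2 * ((1 + c) * (4 + 6 / (b ^ 2 * (1 / 2 - exp (-1)) ^ 3))), N, fun n hn => ?_⟩
  obtain ⟨hp₀, hp₁⟩ := hp n
  have hc : (a * p n - b) ^ 2 ≤ c := by
    have ha : |a * p n| ≤ |a| := by
      rw [abs_mul, abs_of_pos hp₀]
      exact mul_le_of_le_one_right (abs_nonneg a) hp₁.le
    obtain ⟨ha₁, ha₂⟩ := abs_le.1 ha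
    exact sq_le_sq' (by linarith) (by linarith)
  rw [(hμ n).integral_eq_sum hp₀.le hp₁.le]
  calc ∑ k ∈ range (n + 1), binomialWeight n (p n) k * (((n : ℝ) + a) * p n / (b + k) - 1) ^ 2
      ≤ ∑ k ∈ range (n + 1), binomialWeight n (p n) k *
          (2 * ((((k : ℝ) - n * p n) ^ 2 + c) / (b + k) ^ 2)) := by
        refine sum_le_sum fun k _ => mul_le_mul_of_nonneg_left ?_
          (binomialWeight_nonneg hp₀.le hp₁.le k)
        rw [add_mul]
        exact div_sub_one_sq_le (by positivity) hc
    _ = 2 * ∑ k ∈ range (n + 1), binomialWeight n (p n) k *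
          ((((k : ℝ) - n * p n) ^ 2 + c) / (b + k) ^ 2) := by
        rw [mul_sum]
        exact sum_congr rfl fun k _ => mul_left_comm _ _ _
    _ ≤ 2 * ((1 + c) * (4 + 6 / (b ^ 2 * (1 / 2 - exp (-1)) ^ 3)) / (n * p n)) := by
        gcongr
        exact sum_binomialWeight_mul_div_sq_le hp₁.le hb (hN n hn) (sq_nonneg _)
    _ = _ := (mul_div_assoc _ _ _).symm

/-- If `X_n ~ Bin(n, p_n)` with `n p_n → ∞`, then for fixed `a ≥ 0` and `b > 0`,
`E[((n+a) p_n / (b + X_n) − 1)²] = O(1/(n p_n))` as `n → ∞`. -/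
theorem binomial_inverse_moment_bound (p : ℕ → ℝ) (hp : ∀ n, p n ∈ Set.Ioo (0 : ℝ) 1)
    (μ : ℕ → Measure ℕ) (hμ : ∀ n, IsBinomial (μ n) n (p n))
    (hnp : Tendsto (fun n : ℕ => (n : ℝ) * p n) atTop atTop)
    (a b : ℝ) (ha : 0 ≤ a) (hb : 0 < b) :
    ∃ C : ℝ, ∃ N : ℕ, ∀ n ≥ N,
      ∫ x, (((n : ℝ) + a) * p n / (b + (x : ℝ)) - 1) ^ 2 ∂(μ n)
        ≤ C / ((n : ℝ) * p n) :=
  binomial_inverse_moment_bound_general p hp μ hμ hnp a b hb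
end
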